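/- The inverse braiding yields an antisymmetriser with the same degeneracy: the map A⁽²⁾_{σ⁻¹} := id_{V⊗V} − σ⁻¹ satisfies A⁽²⁾_{σ⁻¹} ∘ A⁽²⁾_{σ⁻¹} = (1+q⁻²) · A⁽²⁾_{σ⁻¹} and has rank 3. -/

import Mathlib

/-! `σ` satisfies the Hecke relation `(σ - 1)(σ + q²) = 0`. Multiplying it by `σ⁻¹` gives
`q² σ⁻¹ = σ - (1 - q²)`, i.e. `id - σ⁻¹ = q⁻² (id - σ)`, so both claims reduce to statements about
`id - σ`: the Hecke relation gives `(id - σ)² = (1 + q²)(id - σ)`, and the range of `id - σ` is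
spanned by the three linearly independent `q`-wedge products `ω₋ ∧ ω₊`, `ω₋ ∧ ω_z`, `ω_z ∧ ω₊`. -/

open TensorProduct

noncomputable section

/-- The 3-dimensional complex vector space with basis `ω 0 = ω₋`, `ω 1 = ω₊`, `ω 2 = ω_z`. -/
abbrev V : Type := Fin 3 → ℂ

/-- The distinguished basis `(ω₋, ω₊, ω_z)` of `V`. -/
def ω : Fin 3 → V := fun i => Pi.basisFun ℂ (Fin 3) i

/-- The basis `ω_a ⊗ ω_b` of `V ⊗ V`. -/
def basisVV : Module.Basis (Fin 3 × Fin 3) ℂ (V ⊗[ℂ] V) :=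
  (Pi.basisFun ℂ (Fin 3)).tensorProduct (Pi.basisFun ℂ (Fin 3))

/-- The values of the braiding `σ` on the basis vectors `ω_a ⊗ ω_b`
(first index `0 = −`, `1 = +`, `2 = z`). -/
def σval (q : ℝ) : Fin 3 → Fin 3 → V ⊗[ℂ] V :=
  ![![ω 0 ⊗ₜ[ℂ] ω 0,
     (1 - (q : ℂ) ^ 2) • (ω 0 ⊗ₜ[ℂ] ω 1) + ((q : ℂ) ^ 2)⁻¹ • (ω 1 ⊗ₜ[ℂ] ω 0),
     (1 - (q : ℂ) ^ 2) • (ω 0 ⊗ₜ[ℂ] ω 2) + ((q : ℂ) ^ 4)⁻¹ • (ω 2 ⊗ₜ[ℂ] ω 0)],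
    ![(q : ℂ) ^ 4 • (ω 0 ⊗ₜ[ℂ] ω 1),
      ω 1 ⊗ₜ[ℂ] ω 1,
      (q : ℂ) ^ 6 • (ω 2 ⊗ₜ[ℂ] ω 1)],
    ![(q : ℂ) ^ 6 • (ω 0 ⊗ₜ[ℂ] ω 2),
      (1 - (q : ℂ) ^ 2) • (ω 2 ⊗ₜ[ℂ] ω 1) + ((q : ℂ) ^ 4)⁻¹ • (ω 1 ⊗ₜ[ℂ] ω 2),
      ω 2 ⊗ₜ[ℂ] ω 2]]

/-- The braiding `σ` of Woronowicz's 3d left covariant calculus on `SU_q(2)`. -/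
def σmap (q : ℝ) : (V ⊗[ℂ] V) →ₗ[ℂ] (V ⊗[ℂ] V) :=
  basisVV.constr ℂ (fun p => σval q p.1 p.2)

section Hecke

variable {R A : Type*} [CommRing R] [Ring A] [Algebra R A] {t : R} {σ τ : A}

theorem one_sub_mul_self_of_hecke (h : σ * σ = (1 - t) • σ + t • 1) :
    (1 - σ) * (1 - σ) = (1 + t) • (1 - σ) := by
  rw [sub_mul, one_mul, mul_sub, mul_one, h]
  module

theorem smul_one_sub_left_inv_of_hecke (h : σ * σ = (1 - t) • σ + t • 1) (hτ : τ * σ = 1) :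
    t • (1 - τ) = 1 - σ := by
  have hσ : σ = (1 - t) • 1 + t • τ := by
    calc σ = τ * (σ * σ) := by rw [← mul_assoc, hτ, one_mul]
      _ = (1 - t) • 1 + t • τ := by rw [h, mul_add, mul_smul_comm, hτ, mul_smul_comm, mul_one]
  rw [hσ]
  module

end Hecke

section HeckeField

variable {K A : Type*} [Field K] [Ring A] [Algebra K A] {t : K} {σ τ : A}

theorem one_sub_left_inv_eq_inv_smul_of_hecke (h : σ * σ = (1 - t) • σ + t • 1)
    (hτ : τ * σ = 1) (ht : t ≠ 0) : 1 - τ = t⁻¹ • (1 - σ) := by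
  rw [← smul_one_sub_left_inv_of_hecke h hτ, inv_smul_smul₀ ht]

theorem one_sub_left_inv_mul_self_of_hecke (h : σ * σ = (1 - t) • σ + t • 1) (hτ : τ * σ = 1)
    (ht : t ≠ 0) : (1 - τ) * (1 - τ) = (1 + t⁻¹) • (1 - τ) := by
  rw [one_sub_left_inv_eq_inv_smul_of_hecke h hτ ht, smul_mul_smul_comm,
    one_sub_mul_self_of_hecke h, smul_smul, smul_smul]
  congr 1
  field_simp
  ring

end HeckeField

theorem basisVV_apply (p : Fin 3 × Fin 3) : basisVV p = ω p.1 ⊗ₜ[ℂ] ω p.2 := by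
  simp [basisVV, Module.Basis.tensorProduct_apply', ω]

theorem basisVV_repr_tmul (a b : Fin 3) :
    basisVV.repr (ω a ⊗ₜ[ℂ] ω b) = Finsupp.single (a, b) 1 := by
  rw [← basisVV_apply (a, b), basisVV.repr_self]

theorem σmap_tmul (q : ℝ) (a b : Fin 3) : σmap q (ω a ⊗ₜ[ℂ] ω b) = σval q a b := by
  rw [← basisVV_apply (a, b), σmap, Module.Basis.constr_basis]

theorem σmap_hecke {q : ℝ} (hq : (q : ℂ) ≠ 0) :
    σmap q * σmap q = (1 - (q : ℂ) ^ 2) • σmap q + (q : ℂ) ^ 2 • 1 := by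
  refine basisVV.ext fun ⟨a, b⟩ => ?_
  rw [basisVV_apply]
  fin_cases a <;> fin_cases b <;>
    simp [σmap_tmul, σval, smul_add] <;> match_scalars <;> field_simp <;> ring

/-- `ω₋ ∧ ω₊`, `ω₋ ∧ ω_z`, `ω_z ∧ ω₊`, i.e. `(id − σ)` applied to `ω₋ ⊗ ω₊`, `ω₋ ⊗ ω_z`,
`ω_z ⊗ ω₊`. -/
def wedge (q : ℝ) : Fin 3 → V ⊗[ℂ] V :=
  ![(q : ℂ) ^ 2 • (ω 0 ⊗ₜ[ℂ] ω 1) - ((q : ℂ) ^ 2)⁻¹ • (ω 1 ⊗ₜ[ℂ] ω 0),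
    (q : ℂ) ^ 2 • (ω 0 ⊗ₜ[ℂ] ω 2) - ((q : ℂ) ^ 4)⁻¹ • (ω 2 ⊗ₜ[ℂ] ω 0),
    (q : ℂ) ^ 2 • (ω 2 ⊗ₜ[ℂ] ω 1) - ((q : ℂ) ^ 4)⁻¹ • (ω 1 ⊗ₜ[ℂ] ω 2)]

theorem linearIndependent_wedge {q : ℝ} (hq : (q : ℂ) ≠ 0) : LinearIndependent ℂ (wedge q) := by
  refine Fintype.linearIndependent_iff.2 fun g hg => ?_
  have coord (p : Fin 3 × Fin 3) : basisVV.repr (∑ j, g j • wedge q j) p = 0 := by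
    simp [hg]
  have h₀ := coord (0, 1)
  have h₁ := coord (0, 2)
  have h₂ := coord (2, 1)
  simp [wedge, Fin.sum_univ_three, basisVV_repr_tmul, hq] at h₀ h₁ h₂
  intro i
  fin_cases i <;> assumption

theorem one_sub_σmap_tmul_eq_smul_wedge {q : ℝ} (hq : (q : ℂ) ≠ 0) (a b : Fin 3) :
    (1 - σmap q) (ω a ⊗ₜ[ℂ] ω b) =
      ![![0, 1, 1], ![-(q : ℂ) ^ 2, 0, -(q : ℂ) ^ 4], ![-(q : ℂ) ^ 4, 1, 0]] a b •
        wedge q (![![0, 0, 1], ![0, 0, 2], ![1, 2, 0]] a b) := by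
  fin_cases a <;> fin_cases b <;>
    simp [σmap_tmul, σval, wedge] <;> match_scalars <;> field_simp <;> ring

theorem range_one_sub_σmap {q : ℝ} (hq : (q : ℂ) ≠ 0) :
    LinearMap.range (1 - σmap q) = Submodule.span ℂ (Set.range (wedge q)) := by
  apply le_antisymm
  · rw [LinearMap.range_eq_map, ← basisVV.span_eq, Submodule.map_span, Submodule.span_le]
    rintro _ ⟨_, ⟨⟨a, b⟩, rfl⟩, rfl⟩
    rw [basisVV_apply, one_sub_σmap_tmul_eq_smul_wedge hq]
    exact Submodule.smul_mem _ _ (Submodule.subset_span ⟨_, rfl⟩)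
  · rw [Submodule.span_le]
    rintro _ ⟨i, rfl⟩
    refine ⟨ω (![0, 0, 2] i) ⊗ₜ[ℂ] ω (![1, 2, 1] i), ?_⟩
    rw [one_sub_σmap_tmul_eq_smul_wedge hq]
    fin_cases i <;> simp

theorem A2_inverse_braiding_general (q : ℝ) (hq0 : 0 < q)
    (σinv : (V ⊗[ℂ] V) →ₗ[ℂ] (V ⊗[ℂ] V))
    (hinv₁ : σinv ∘ₗ σmap q = LinearMap.id) :
    (LinearMap.id - σinv) ∘ₗ (LinearMap.id - σinv) =
        (1 + ((q : ℂ) ^ 2)⁻¹) • (LinearMap.id - σinv) ∧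
      Module.finrank ℂ (LinearMap.range (LinearMap.id - σinv)) = 3 := by
  have hq : (q : ℂ) ≠ 0 := by exact_mod_cast hq0.ne'
  have hq2 : (q : ℂ) ^ 2 ≠ 0 := pow_ne_zero 2 hq
  have hecke := σmap_hecke hq
  have hτ : σinv * σmap q = 1 := hinv₁
  have hA : LinearMap.id - σinv = ((q : ℂ) ^ 2)⁻¹ • (1 - σmap q) :=
    one_sub_left_inv_eq_inv_smul_of_hecke (A := Module.End ℂ (V ⊗[ℂ] V)) hecke hτ hq2
  constructor
  · exact one_sub_left_inv_mul_self_of_hecke (A := Module.End ℂ (V ⊗[ℂ] V)) hecke hτ hq2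
  · rw [hA, LinearMap.range_smul _ _ (inv_ne_zero hq2), range_one_sub_σmap hq,
      finrank_span_eq_card (linearIndependent_wedge hq), Fintype.card_fin]

/-- for the inverse braiding `σ⁻¹` (characterised by `σ⁻¹ ∘ σ = σ ∘ σ⁻¹ = id`),
the antisymmetriser `A⁽²⁾_{σ⁻¹} = id − σ⁻¹` satisfies
`A⁽²⁾_{σ⁻¹} ∘ A⁽²⁾_{σ⁻¹} = (1+q⁻²) · A⁽²⁾_{σ⁻¹}` and has rank 3. -/
theorem A2_inverse_braiding (q : ℝ) (hq0 : 0 < q) (hq1 : q < 1)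
    (σinv : (V ⊗[ℂ] V) →ₗ[ℂ] (V ⊗[ℂ] V))
    (hinv₁ : σinv ∘ₗ σmap q = LinearMap.id)
    (hinv₂ : σmap q ∘ₗ σinv = LinearMap.id) :
    (LinearMap.id - σinv) ∘ₗ (LinearMap.id - σinv) =
        (1 + ((q : ℂ) ^ 2)⁻¹) • (LinearMap.id - σinv) ∧
      Module.finrank ℂ (LinearMap.range (LinearMap.id - σinv)) = 3 :=
  A2_inverse_braiding_general q hq0 σinv hinv₁

end
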